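/- For every natural number k ≥ 2 and every n ≥ 2 with L(n, k) > 0, the rank of the hereditary base-(k+n−1) representation of L(n, k) is strictly less than the base k+n−1; equivalently, L(n, k) < (k+n−1)^{(k+n−1)}, so that from the second term onward the base-change operation leaves all exponents in the hereditary representation of each term of L(·, k) unchanged. -/

import Mathlib

/-- `hsub b u m` substitutes the value `u` for the base `b` throughout the
hereditary base-`b` representation of `m` (with `hsub b u 0 = 0`). -/
def hsub (b u : ℕ) (m : ℕ) : ℕ :=
  if m = 0 then 0
  else
    u ^ hsub b u (Nat.log b m) * (m / b ^ Nat.log b m) + hsub b u (m % b ^ Nat.log b m)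
termination_by m
decreasing_by
  · exact Nat.log_lt_self b (by assumption)
  · have hpos : 0 < b ^ Nat.log b m := by
      rcases Nat.eq_zero_or_pos b with hb | hb
      · simp [hb]
      · exact Nat.pow_pos hb
    exact lt_of_lt_of_le (Nat.mod_lt _ hpos) (Nat.pow_log_le_self b (by assumption))

/-- Goodstein's base-change ("bumping") function: replace the base `b` by `b + 1`
throughout the hereditary base-`b` representation of `m` (with `B b 0 = 0`). -/
def B (b m : ℕ) : ℕ := hsub b (b + 1) m

/-- The Goodstein sequence of `m`: `G 1 m = m`, and `G (k+1) m = B (k+1) (G k m) - 1`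
for `k ≥ 1` (truncated subtraction), so the `k`-th term is written in hereditary
base `k + 1`. -/
def G : ℕ → ℕ → ℕ
  | 0, m => m
  | 1, m => m
  | (k + 2), m => B (k + 2) (G (k + 1) m) - 1

/-- The auxiliary Goodstein-type sequence: `L 1 k = k ^ k` (written in hereditary
base `k`), and `L (n+1) k = B (k+n-1) (L n k) - 1` for `n ≥ 1` (truncated
subtraction), so the `n`-th term is written in hereditary base `k + n - 1`. -/
def L : ℕ → ℕ → ℕ
  | 0, k => k ^ k
  | 1, k => k ^ k
  | (n + 2), k => B (k + n) (L (n + 1) k) - 1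

/-- `O b m` is the ordinal obtained by substituting `ω` for the base `b`
throughout the hereditary base-`b` representation of `m` (with `O b 0 = 0`). -/
noncomputable def O (b : ℕ) (m : ℕ) : Ordinal :=
  if m = 0 then 0
  else
    Ordinal.omega0 ^ O b (Nat.log b m) * ((m / b ^ Nat.log b m : ℕ) : Ordinal)
      + O b (m % b ^ Nat.log b m)
termination_by m
decreasing_by
  · exact Nat.log_lt_self b (by assumption)
  · have hpos : 0 < b ^ Nat.log b m := by
      rcases Nat.eq_zero_or_pos b with hb | hb
      · simp [hb]
      · exact Nat.pow_pos hb
    exact lt_of_lt_of_le (Nat.mod_lt _ hpos) (Nat.pow_log_le_self b (by assumption))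

/-! Every exponent in the hereditary base-`b` representation of a number below `b ^ b` is
smaller than `b`, so it is left unchanged by the base change; hence bumping such a number
from base `b` to any `u ≥ b` keeps it below `u ^ b`. Starting from
`L 2 k = (k + 1) ^ (k + 1) - 1`, the bound `L n k < (k + n - 1) ^ (k + n - 1)` therefore
propagates along the sequence, and it bounds the rank as well. -/

lemma hsub_zero (b u : ℕ) : hsub b u 0 = 0 := by
  rw [hsub, if_pos rfl]

lemma hsub_of_ne_zero (b u : ℕ) {m : ℕ} (hm : m ≠ 0) :
    hsub b u m = u ^ hsub b u (Nat.log b m) * (m / b ^ Nat.log b m)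
      + hsub b u (m % b ^ Nat.log b m) := by
  rw [hsub, if_neg hm]

lemma hsub_of_lt (b u : ℕ) {e : ℕ} (he : e < b) : hsub b u e = e := by
  rcases Nat.eq_zero_or_pos e with rfl | he0
  · exact hsub_zero b u
  · rw [hsub_of_ne_zero b u he0.ne', Nat.log_of_lt he, pow_zero, Nat.mod_one, Nat.div_one,
      hsub_zero, pow_zero, one_mul, add_zero]

lemma hsub_pow (u : ℕ) {b : ℕ} (hb : 1 < b) (e : ℕ) : hsub b u (b ^ e) = u ^ hsub b u e := by
  have hpos : 0 < b ^ e := Nat.pow_pos (by omega)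
  rw [hsub_of_ne_zero b u hpos.ne', Nat.log_pow hb, Nat.div_self hpos, Nat.mod_self,
    hsub_zero, mul_one, add_zero]

lemma hsub_self (u : ℕ) {b : ℕ} (hb : 1 < b) : hsub b u b = u := by
  simpa [hsub_of_lt b u hb] using hsub_pow u hb 1

lemma hsub_pow_self (u : ℕ) {b : ℕ} (hb : 1 < b) : hsub b u (b ^ b) = u ^ u := by
  rw [hsub_pow u hb, hsub_self u hb]

/-- Write `m = b ^ e * d + r` with `e < E` and `r < b ^ e`. Since `e < b` the exponent is
unchanged, and `d < b ≤ u` keeps the leading digit below the new base. -/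
lemma hsub_lt_pow {b u : ℕ} (hb : 1 < b) (hbu : b ≤ u) {E : ℕ} (hE : E ≤ b) :
    ∀ m, m < b ^ E → hsub b u m < u ^ E := by
  induction E using Nat.strong_induction_on with
  | _ E ih =>
    intro m hm
    rcases Nat.eq_zero_or_pos m with rfl | hm0
    · rw [hsub_zero]
      exact Nat.pow_pos (by omega)
    set e := Nat.log b m
    have heE : e < E := Nat.log_lt_of_lt_pow hm0.ne' hm
    have hbe : 0 < b ^ e := Nat.pow_pos (by omega)
    have hdigit : m / b ^ e < b := Nat.div_lt_of_lt_mul <| by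
      simpa [pow_succ, mul_comm] using Nat.lt_pow_succ_log_self hb m
    have hrest : hsub b u (m % b ^ e) < u ^ e :=
      ih e heE (by omega) _ (Nat.mod_lt _ hbe)
    rw [hsub_of_ne_zero b u hm0.ne', hsub_of_lt b u (show e < b by omega)]
    calc u ^ e * (m / b ^ e) + hsub b u (m % b ^ e)
        < u ^ e * (m / b ^ e + 1) := by rw [mul_add_one]; omega
      _ ≤ u ^ e * u := Nat.mul_le_mul_left _ (by omega)
      _ = u ^ (e + 1) := (pow_succ u e).symm
      _ ≤ u ^ E := Nat.pow_le_pow_right (by omega) heE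

lemma B_lt_pow_self {b m : ℕ} (hb : 1 < b) (hm : m < b ^ b) : B b m < (b + 1) ^ b :=
  hsub_lt_pow hb (Nat.le_succ b) le_rfl m hm

lemma L_two {k : ℕ} (hk : 2 ≤ k) : L 2 k = (k + 1) ^ (k + 1) - 1 := by
  change B k (k ^ k) - 1 = _
  rw [B, hsub_pow_self (k + 1) hk]

lemma L_lt_pow {k n : ℕ} (hk : 2 ≤ k) (hn : 2 ≤ n) : L n k < (k + n - 1) ^ (k + n - 1) := by
  induction n, hn using Nat.le_induction with
  | base =>
    rw [L_two hk, show k + 2 - 1 = k + 1 by omega]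
    exact Nat.sub_lt (Nat.pow_pos (by omega)) one_pos
  | succ n hn ih =>
    obtain ⟨n, rfl⟩ : ∃ j, n = j + 1 := ⟨n - 1, by omega⟩
    have hL : L (n + 2) k = B (k + n) (L (n + 1) k) - 1 := rfl
    rw [show k + (n + 1) - 1 = k + n by omega] at ih
    rw [show k + (n + 1 + 1) - 1 = k + n + 1 by omega, hL]
    calc B (k + n) (L (n + 1) k) - 1
        ≤ B (k + n) (L (n + 1) k) := Nat.sub_le _ _
      _ < (k + n + 1) ^ (k + n) := B_lt_pow_self (by omega) ih
      _ ≤ (k + n + 1) ^ (k + n + 1) := Nat.pow_le_pow_right (by omega) (by omega)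

theorem L_rank_lt_base_general (k n : ℕ) (hk : 2 ≤ k) (hn : 2 ≤ n) :
    Nat.log (k + n - 1) (L n k) < k + n - 1 ∧ L n k < (k + n - 1) ^ (k + n - 1) := by
  have h := L_lt_pow hk hn
  exact ⟨Nat.log_lt_of_lt_pow' (by omega) h, h⟩

/-- For every `k ≥ 2` and every `n ≥ 2` with `L n k > 0`, the rank of the
hereditary base-`(k+n-1)` representation of `L n k` is strictly less than the
base `k+n-1`; equivalently `L n k < (k+n-1)^(k+n-1)`. -/
theorem L_rank_lt_base (k n : ℕ) (hk : 2 ≤ k) (hn : 2 ≤ n) (hpos : 0 < L n k) :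
    Nat.log (k + n - 1) (L n k) < k + n - 1 ∧ L n k < (k + n - 1) ^ (k + n - 1) :=
  L_rank_lt_base_general k n hk hn
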